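/- Let D = Σ λ_i E_ii be diagonal positive definite. The derivative of the Kubo-Mori metric satisfies dG(D)(Z)(X) = −Σ_{i,j,k} m_ijk (E_ii Z E_jj X E_kk + E_ii X E_jj Z E_kk), where m_ijk = ∫_0^∞ (λ_i+t)^{-1}(λ_j+t)^{-1}(λ_k+t)^{-1} dt and dG(D)(Z)(X) = −∫_0^∞ [(D+t)^{-1}Z(D+t)^{-1}X(D+t)^{-1} + (D+t)^{-1}X(D+t)^{-1}Z(D+t)^{-1}] dt. -/

import Mathlib

/-! The resolvent `(D + t)⁻¹` is diagonal with entries `(λᵢ + t)⁻¹`, so expanding its three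
occurrences in the matrix units turns the integrand into a finite combination of constant matrices
with coefficients `(λᵢ + t)⁻¹(λⱼ + t)⁻¹(λₖ + t)⁻¹`. These coefficients are dominated by
`(t + min λ)⁻³`, hence integrable on `(0, ∞)`, and the integral commutes with the finite sum. -/

open MeasureTheory Matrix
attribute [local instance] Matrix.frobeniusNormedAddCommGroup Matrix.frobeniusNormedSpace

open Set

theorem integrableOn_Ioi_inv_add_mul_inv_add_mul_inv_add {a b c : ℝ}
    (ha : 0 < a) (hb : 0 < b) (hc : 0 < c) :
    IntegrableOn (fun t => (a + t)⁻¹ * (b + t)⁻¹ * (c + t)⁻¹) (Ioi 0) := by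
  set m := min a (min b c)
  have hm : 0 < m := lt_min ha (lt_min hb hc)
  have hdom : IntegrableOn (fun t : ℝ => (t + m) ^ (-3 : ℝ)) (Ioi 0) :=
    integrableOn_add_rpow_Ioi_of_lt (by norm_num) (by linarith)
  refine hdom.mono' (by fun_prop : Measurable _).aestronglyMeasurable ?_
  filter_upwards [ae_restrict_mem measurableSet_Ioi] with t (ht : 0 < t)
  rw [Real.norm_of_nonneg (by positivity)]
  calc (a + t)⁻¹ * (b + t)⁻¹ * (c + t)⁻¹ ≤ (m + t)⁻¹ * (m + t)⁻¹ * (m + t)⁻¹ := by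
        gcongr
        · exact min_le_left _ _
        · exact (min_le_right _ _).trans (min_le_left _ _)
        · exact (min_le_right _ _).trans (min_le_right _ _)
    _ = (t + m) ^ (-3 : ℝ) := by
        rw [Real.rpow_neg (by positivity), add_comm t m]
        norm_cast
        rw [← inv_pow]
        ring

section Matrix

variable {ι R : Type*} [Fintype ι] [DecidableEq ι]

theorem inv_diagonal_of_ne_zero {K : Type*} [Field K] {v : ι → K} (hv : ∀ i, v i ≠ 0) :
    (diagonal v)⁻¹ = diagonal fun i => (v i)⁻¹ := by
  refine inv_eq_right_inv ?_
  rw [diagonal_mul_diagonal, ← diagonal_one]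
  exact congrArg diagonal (funext fun i => mul_inv_cancel₀ (hv i))

theorem diagonal_mul_mul_diagonal_mul_mul_diagonal [CommSemiring R] (d e f : ι → R)
    (A B : Matrix ι ι R) :
    diagonal d * A * diagonal e * B * diagonal f =
      ∑ i, ∑ j, ∑ k, (d i * e j * f k) •
        (single i i 1 * A * single j j 1 * B * single k k 1) := by
  have hdiag : ∀ v : ι → R, diagonal v = ∑ i, v i • single i i (1 : R) := fun v => by
    simp only [smul_single, smul_eq_mul, mul_one, sum_single_eq_diagonal]
  rw [hdiag d]
  simp only [Finset.sum_mul]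
  refine Finset.sum_congr rfl fun i _ => ?_
  rw [hdiag e]
  simp only [Finset.mul_sum, Finset.sum_mul]
  refine Finset.sum_congr rfl fun j _ => ?_
  rw [hdiag f, Finset.mul_sum]
  refine Finset.sum_congr rfl fun k _ => ?_
  simp only [smul_mul_assoc, mul_smul_comm, smul_smul, mul_comm, mul_left_comm]

end Matrix

theorem integral_sum_sum_sum_smul_const {α ι E : Type*} [MeasurableSpace α] {μ : Measure α}
    [Fintype ι] [NormedAddCommGroup E] [NormedSpace ℝ E] [CompleteSpace E]
    {f : ι → ι → ι → α → ℝ}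
    (hf : ∀ i j k, Integrable (f i j k) μ) (v : ι → ι → ι → E) :
    ∫ x, ∑ i, ∑ j, ∑ k, f i j k x • v i j k ∂μ = ∑ i, ∑ j, ∑ k, (∫ x, f i j k x ∂μ) • v i j k := by
  have hint : ∀ i j k, Integrable (fun x => f i j k x • v i j k) μ := fun i j k =>
    (hf i j k).smul_const _
  rw [integral_finsetSum _ fun i _ => integrable_finsetSum _ fun j _ =>
    integrable_finsetSum _ fun k _ => hint i j k]
  refine Finset.sum_congr rfl fun i _ => ?_
  rw [integral_finsetSum _ fun j _ => integrable_finsetSum _ fun k _ => hint i j k]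
  refine Finset.sum_congr rfl fun j _ => ?_
  rw [integral_finsetSum _ fun k _ => hint i j k]
  exact Finset.sum_congr rfl fun k _ => integral_smul_const _ _

theorem kubo_mori_metric_derivative_general (n : ℕ) (l : Fin n → ℝ) (hl : ∀ i, 0 < l i)
    (X Z : Matrix (Fin n) (Fin n) ℝ) :
    let D : Matrix (Fin n) (Fin n) ℝ := Matrix.diagonal l
    let E : Fin n → Matrix (Fin n) (Fin n) ℝ := fun i => Matrix.single i i 1
    let m3 : Fin n → Fin n → Fin n → ℝ := fun i j k =>
      ∫ t in Set.Ioi (0:ℝ), (l i + t)⁻¹ * (l j + t)⁻¹ * (l k + t)⁻¹;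
    -(∫ t in Set.Ioi (0:ℝ),
        ((D + t • 1)⁻¹ * Z * (D + t • 1)⁻¹ * X * (D + t • 1)⁻¹ +
         (D + t • 1)⁻¹ * X * (D + t • 1)⁻¹ * Z * (D + t • 1)⁻¹)) =
      -(∑ i : Fin n, ∑ j : Fin n, ∑ k : Fin n,
        m3 i j k • (E i * Z * E j * X * E k + E i * X * E j * Z * E k)) := by
  intro D E m3
  have hresolvent : ∀ t ∈ Ioi (0 : ℝ), (D + t • 1)⁻¹ = diagonal fun i => (l i + t)⁻¹ :=
    fun t (ht : 0 < t) => by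
      rw [smul_one_eq_diagonal, diagonal_add]
      exact inv_diagonal_of_ne_zero fun i => (add_pos (hl i) ht).ne'
  rw [setIntegral_congr_fun measurableSet_Ioi (g := fun t => ∑ i, ∑ j, ∑ k,
      ((l i + t)⁻¹ * (l j + t)⁻¹ * (l k + t)⁻¹) •
        (E i * Z * E j * X * E k + E i * X * E j * Z * E k)) fun t ht => ?_,
    integral_sum_sum_sum_smul_const fun i j k =>
      integrableOn_Ioi_inv_add_mul_inv_add_mul_inv_add (hl i) (hl j) (hl k)]
  simp only [hresolvent t ht, diagonal_mul_mul_diagonal_mul_mul_diagonal,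
    ← Finset.sum_add_distrib, ← smul_add]
  rfl

/-- For `D = diagonal λ` positive definite, the derivative of the Kubo-Mori metric,
`dG(D)(Z)(X) = −∫_0^∞ [(D+t)⁻¹Z(D+t)⁻¹X(D+t)⁻¹ + (D+t)⁻¹X(D+t)⁻¹Z(D+t)⁻¹] dt`,
equals `−Σ_{i,j,k} m_ijk (E_ii Z E_jj X E_kk + E_ii X E_jj Z E_kk)`, with
`m_ijk = ∫_0^∞ (λi+t)⁻¹(λj+t)⁻¹(λk+t)⁻¹ dt`. -/
theorem kubo_mori_metric_derivative (n : ℕ) (l : Fin n → ℝ) (hl : ∀ i, 0 < l i)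
    (X Z : Matrix (Fin n) (Fin n) ℝ) (hX : X.IsSymm) (hZ : Z.IsSymm) :
    let D : Matrix (Fin n) (Fin n) ℝ := Matrix.diagonal l
    let E : Fin n → Matrix (Fin n) (Fin n) ℝ := fun i => Matrix.single i i 1
    let m3 : Fin n → Fin n → Fin n → ℝ := fun i j k =>
      ∫ t in Set.Ioi (0:ℝ), (l i + t)⁻¹ * (l j + t)⁻¹ * (l k + t)⁻¹;
    -(∫ t in Set.Ioi (0:ℝ),
        ((D + t • 1)⁻¹ * Z * (D + t • 1)⁻¹ * X * (D + t • 1)⁻¹ +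
         (D + t • 1)⁻¹ * X * (D + t • 1)⁻¹ * Z * (D + t • 1)⁻¹)) =
      -(∑ i : Fin n, ∑ j : Fin n, ∑ k : Fin n,
        m3 i j k • (E i * Z * E j * X * E k + E i * X * E j * Z * E k)) :=
  kubo_mori_metric_derivative_general n l hl X Z
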